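/- For positive integers q, n, k with 1 ≤ k ≤ n, the number of elements of C_{n,k} with no cycle of length divisible by q equals f_q(n-k+1) - [(-k) mod q ≤ s]·f_q(n-k), where f_q(n) = ∏_{j=1}^{n} (j - [q ∣ j]) and s = q - 2 - (n mod q). -/

import Mathlib

def cosetC (n k : ℕ) : Set (Equiv.Perm (Fin n)) :=
  {σ | ∃ g : Equiv.Perm (Fin n), (∀ i : Fin n, (i : ℕ) < k - 1 → g i = i) ∧
    σ = g * ((List.finRange n).take k).formPerm}

def NoCycleLenMulOf {n : ℕ} (q : ℕ) (σ : Equiv.Perm (Fin n)) : Prop :=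
  ∀ x : Fin n, ¬ q ∣ Function.minimalPeriod σ x

/-- `f_q(n) = ∏_{j=1}^n (j - [q ∣ j])`. -/
def fq (q n : ℕ) : ℕ := ∏ j ∈ Finset.Icc 1 n, (j - if q ∣ j then 1 else 0)

/-!
Conjugating by the cycle `(0 1 … k-1)` turns `C_{n,k}` into the set of permutations containing
the path `0 → 1 → ⋯ → k-1`. For such a permutation `σ` the value `σ (k-1)` is either `0`, which
closes a `k`-cycle and leaves an arbitrary permutation of the other `n - k` points, or one of the
`n - k` points off the path, and then conjugating by a transposition turns `σ` into a permutation
containing a path with `k + 1` vertices. Since conjugation preserves cycle lengths, the count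
`a(n, k)` satisfies `a(n, k) = [q ∤ k] b(n - k) + (n - k) a(n, k + 1)`, where `b(m) = a(m, 1)`
counts all permutations of `m` points with no cycle length divisible by `q`. The closed form obeys
the same recursion: after dividing out `f_q`, this comes down to two identities between the
indicator `[(-k) mod q ≤ q - 2 - (n mod q)]` at `k` and at `k + 1`, checked on residues mod `q`.
-/

open Equiv Function Set

theorem Function.Injective.minimalPeriod_eq_of_semiconj {α β : Type*} {fa : α → α} {fb : β → β}
    {g : α → β} (hg : Injective g) (h : Semiconj g fa fb) (x : α) :
    minimalPeriod fb (g x) = minimalPeriod fa x := by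
  rw [minimalPeriod_eq_minimalPeriod_iff]
  intro m
  simp only [IsPeriodicPt, IsFixedPt, ← (h.iterate_right m).eq, hg.eq_iff]

theorem Function.minimalPeriod_eq_of_eqOn {α : Type*} {f g : α → α} {s : Set α}
    (hg : MapsTo g s s) (h : EqOn f g s) {x : α} (hx : x ∈ s) :
    minimalPeriod f x = minimalPeriod g x := by
  have hf : Semiconj Subtype.val (hg.restrict g s s) f := fun y => (h y.2).symm
  have hg' : Semiconj Subtype.val (hg.restrict g s s) g := fun _ => rfl
  exact (Subtype.val_injective.minimalPeriod_eq_of_semiconj hf ⟨x, hx⟩).trans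
    (Subtype.val_injective.minimalPeriod_eq_of_semiconj hg' ⟨x, hx⟩).symm

theorem Equiv.Perm.exists_extendDomain_eq {α β : Type*} {p : β → Prop} [DecidablePred p]
    (f : α ≃ Subtype p) {g : Perm β} (hg : ∀ b, ¬ p b → g b = b) :
    ∃ e : Perm α, e.extendDomain f = g := by
  have hp : ∀ b, p (g b) ↔ p b := fun b => by
    by_cases hb : p b
    · refine iff_of_true ?_ hb
      by_contra h
      exact h (by rwa [g.injective (hg _ h)])
    · rw [hg b hb]
  refine ⟨f.symm.permCongr (g.subtypePerm hp), Equiv.ext fun b => ?_⟩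
  by_cases hb : p b
  · simp [Perm.extendDomain_apply_subtype _ _ hb]
  · rw [Perm.extendDomain_apply_not_subtype _ _ hb, hg b hb]

theorem Set.ncard_eq_sum_ncard_fiber {α β : Type*} {s : Set α} (hs : s.Finite) {f : α → β}
    {t : Finset β} (hf : ∀ x ∈ s, f x ∈ t) :
    s.ncard = ∑ y ∈ t, {x ∈ s | f x = y}.ncard := by
  classical
  rw [ncard_eq_toFinset_card s hs,
    Finset.card_eq_sum_card_fiberwise fun x hx => hf x (hs.mem_toFinset.1 hx)]
  refine Finset.sum_congr rfl fun y _ => ?_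
  rw [← ncard_coe_finset]
  congr 1
  ext x
  simp

variable {n q : ℕ}

theorem minimalPeriod_conj_apply (ρ σ : Perm (Fin n)) (x : Fin n) :
    minimalPeriod (ρ * σ * ρ⁻¹) (ρ x) = minimalPeriod σ x :=
  ρ.injective.minimalPeriod_eq_of_semiconj (fun y => by simp) x

theorem noCycleLenMulOf_conj_iff (ρ σ : Perm (Fin n)) :
    NoCycleLenMulOf q (ρ * σ * ρ⁻¹) ↔ NoCycleLenMulOf q σ := by
  unfold NoCycleLenMulOf
  rw [ρ.surjective.forall]
  simp only [minimalPeriod_conj_apply]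

theorem ncard_noCycle_eq_of_conj {A B : Set (Perm (Fin n))} (ρ : Perm (Fin n))
    (h : ∀ σ, σ ∈ A ↔ ρ * σ * ρ⁻¹ ∈ B) :
    {σ ∈ A | NoCycleLenMulOf q σ}.ncard = {σ ∈ B | NoCycleLenMulOf q σ}.ncard := by
  have hpre : {σ ∈ A | NoCycleLenMulOf q σ} = MulAut.conj ρ ⁻¹' {σ ∈ B | NoCycleLenMulOf q σ} := by
    ext σ
    exact and_congr (h σ) (noCycleLenMulOf_conj_iff ρ σ).symm
  rw [hpre, ncard_preimage_of_injective_subset_range (MulAut.conj ρ).injective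
    ((MulAut.conj ρ).surjective.range_eq ▸ subset_univ _)]

def headCycle (n k : ℕ) : Perm (Fin n) := ((List.finRange n).take k).formPerm

section headCycle

variable {k : ℕ}

theorem headCycle_pow_apply (hkn : k ≤ n) (j : ℕ) {x : Fin n} (hx : (x : ℕ) < k) :
    ((headCycle n k ^ j) x : ℕ) = (x + j) % k := by
  set l := (List.finRange n).take k
  have hlen : l.length = k := by simp [l, hkn]
  have hget : ∀ (m : ℕ) (hm : m < l.length), l[m] = ⟨m, by omega⟩ := fun m hm => by simp [l]
  have hnodup : l.Nodup := (List.nodup_finRange n).sublist (List.take_sublist _ _)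
  have := List.formPerm_pow_apply_getElem l hnodup j x (by omega)
  rw [hget, hget] at this
  rw [headCycle, this]
  simp [hlen]

theorem headCycle_apply_of_lt (hkn : k ≤ n) {x : Fin n} (hx : (x : ℕ) < k) :
    (headCycle n k x : ℕ) = (x + 1) % k := by
  simpa using headCycle_pow_apply hkn 1 hx

theorem headCycle_apply_of_le {x : Fin n} (hx : k ≤ (x : ℕ)) : headCycle n k x = x := by
  refine List.formPerm_apply_of_notMem fun hmem => ?_
  obtain ⟨m, hm, rfl⟩ := List.mem_iff_getElem.1 hmem
  simp only [List.getElem_take, List.getElem_finRange, Fin.cast_mk, List.length_take,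
    List.length_finRange, lt_inf_iff] at hx hm
  omega

theorem headCycle_lt_iff (hkn : k ≤ n) {x : Fin n} : (headCycle n k x : ℕ) < k ↔ (x : ℕ) < k := by
  rcases lt_or_ge (x : ℕ) k with hx | hx
  · simp [headCycle_apply_of_lt hkn hx, hx, Nat.mod_lt _ (by omega : 0 < k)]
  · simp [headCycle_apply_of_le hx]

theorem minimalPeriod_headCycle (hkn : k ≤ n) {x : Fin n} (hx : (x : ℕ) < k) :
    minimalPeriod (headCycle n k) x = k := by
  refine Nat.dvd_right_iff_eq.1 fun j => ?_
  rw [← isPeriodicPt_iff_minimalPeriod_dvd, IsPeriodicPt, IsFixedPt, ← Perm.coe_pow, Fin.ext_iff,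
    headCycle_pow_apply hkn j hx]
  have := Nat.add_modEq_left_iff (a := (x : ℕ)) (b := j) (n := k)
  rwa [Nat.ModEq, Nat.mod_eq_of_lt hx] at this

end headCycle

def pathPerms (n k : ℕ) : Set (Perm (Fin n)) :=
  {σ | ∀ j : Fin n, (j : ℕ) + 1 < k → (σ j : ℕ) = j + 1}

noncomputable def pathCount (q n k : ℕ) : ℕ := {σ ∈ pathPerms n k | NoCycleLenMulOf q σ}.ncard

noncomputable def noCycleCount (q m : ℕ) : ℕ := {τ : Perm (Fin m) | NoCycleLenMulOf q τ}.ncard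

theorem pathPerms_one : pathPerms n 1 = univ :=
  eq_univ_of_forall fun _ j hj => absurd hj (by omega)

theorem noCycleCount_zero : noCycleCount q 0 = 1 := by
  simp [noCycleCount, NoCycleLenMulOf]

theorem mem_cosetC_iff {k : ℕ} (hkn : k ≤ n) (σ : Perm (Fin n)) :
    σ ∈ cosetC n k ↔ headCycle n k * σ * (headCycle n k)⁻¹ ∈ pathPerms n k := by
  set c := headCycle n k
  have key (g : Perm (Fin n)) (j : Fin n) (hj : (j : ℕ) + 1 < k) :
      (c (g j) : ℕ) = j + 1 ↔ g j = j := by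
    rw [← Nat.mod_eq_of_lt hj, ← headCycle_apply_of_lt hkn (by omega), Fin.val_inj,
      c.injective.eq_iff]
  constructor
  · rintro ⟨g, hg, rfl⟩ j hj
    change ((c * (g * c) * c⁻¹) j : ℕ) = j + 1
    rw [← mul_assoc, mul_inv_cancel_right, Perm.mul_apply, key g j hj]
    exact hg j (by omega)
  · intro h
    refine ⟨σ * c⁻¹, fun j hj => (key _ j (by omega)).1 ?_, (inv_mul_cancel_right σ c).symm⟩
    simpa [mul_assoc] using h j (by omega)

theorem ncard_cosetC_noCycle {k : ℕ} (hkn : k ≤ n) :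
    {σ ∈ cosetC n k | NoCycleLenMulOf q σ}.ncard = pathCount q n k :=
  ncard_noCycle_eq_of_conj _ (mem_cosetC_iff hkn)

theorem lt_apply_of_mem_pathPerms {i : Fin n} {σ : Perm (Fin n)} (hσ : σ ∈ pathPerms n (i + 1))
    (h0 : (σ i : ℕ) ≠ 0) : (i : ℕ) < σ i := by
  by_contra! hle
  have hprev : σ ⟨σ i - 1, by omega⟩ = σ i :=
    Fin.ext <| (hσ _ (show (σ i : ℕ) - 1 + 1 < i + 1 by omega)).trans
      (show (σ i : ℕ) - 1 + 1 = σ i by omega)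
  have : (σ i : ℕ) - 1 = i := congrArg Fin.val (σ.injective hprev)
  omega

theorem mem_pathPerms_succ_iff {i : Fin n} {v : ℕ} (hiv : (i : ℕ) < v) (hvn : v < n)
    (σ : Perm (Fin n)) :
    σ ∈ {σ ∈ pathPerms n (i + 1) | (σ i : ℕ) = v} ↔
      swap ⟨i + 1, by omega⟩ ⟨v, hvn⟩ * σ * (swap ⟨i + 1, by omega⟩ ⟨v, hvn⟩)⁻¹ ∈
        pathPerms n (i + 2) := by
  set s := swap (⟨i + 1, by omega⟩ : Fin n) ⟨v, hvn⟩
  have hs (j : Fin n) (hj : (j : ℕ) ≤ i) : s j = j :=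
    swap_apply_of_ne_of_ne (Fin.ne_of_val_ne (show (j : ℕ) ≠ i + 1 by omega))
      (Fin.ne_of_val_ne (show (j : ℕ) ≠ v by omega))
  have hs' (j : Fin n) (hj : (j : ℕ) < i) : s ⟨j + 1, by omega⟩ = ⟨j + 1, by omega⟩ :=
    hs _ (show j + 1 ≤ (i : ℕ) by omega)
  simp only [pathPerms, mem_ofPred_eq, show s⁻¹ = s from swap_inv _ _, Perm.mul_apply]
  constructor
  · rintro ⟨hσ, hσi⟩ j hj
    rw [hs j (by omega)]
    rcases Nat.lt_or_ge (j : ℕ) i with hji | hji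
    · rw [show σ j = ⟨j + 1, by omega⟩ from Fin.ext (hσ j (by omega)), hs' j hji]
    · obtain rfl : j = i := Fin.ext (by omega)
      rw [show σ j = ⟨v, hvn⟩ from Fin.ext hσi, swap_apply_right]
  · intro h
    have hσ (j : Fin n) (hj : (j : ℕ) ≤ i) : σ j = s ⟨j + 1, by omega⟩ := by
      have := h j (by omega)
      rw [hs j hj] at this
      exact swap_apply_eq_iff.1 (Fin.ext this)
    refine ⟨fun j hj => ?_, ?_⟩
    · rw [hσ j (by omega), hs' j (by omega)]
    · rw [hσ i le_rfl, swap_apply_left]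

/-- Any bijection will do, since only cardinalities matter. -/
noncomputable def tailEquiv (i : Fin n) : Fin (n - (i + 1)) ≃ {x : Fin n // i < x} :=
  Fintype.equivOfCardEq <| by
    rw [Fintype.card_fin, Fintype.card_subtype, Finset.filter_lt_eq_Ioi, Fin.card_Ioi]
    omega

noncomputable def closeCycle (i : Fin n) (τ : Perm (Fin (n - (i + 1)))) : Perm (Fin n) :=
  τ.extendDomain (tailEquiv i) * headCycle n (i + 1)

section closeCycle

variable {i : Fin n} {τ : Perm (Fin (n - (i + 1)))}

theorem closeCycle_apply_of_le {x : Fin n} (hx : x ≤ i) :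
    closeCycle i τ x = headCycle n (i + 1) x := by
  have : (headCycle n (i + 1) x : ℕ) < i + 1 :=
    (headCycle_lt_iff (k := i + 1) i.isLt).2 (Nat.lt_succ_of_le hx)
  exact Perm.extendDomain_apply_not_subtype _ _ (by rw [Fin.lt_def]; omega)

theorem closeCycle_apply_tailEquiv (y : Fin (n - (i + 1))) :
    closeCycle i τ (tailEquiv i y) = tailEquiv i (τ y) := by
  rw [closeCycle, Perm.mul_apply, headCycle_apply_of_le (tailEquiv i y).2,
    Perm.extendDomain_apply_image]

theorem minimalPeriod_closeCycle_tailEquiv (y : Fin (n - (i + 1))) :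
    minimalPeriod (closeCycle i τ) (tailEquiv i y) = minimalPeriod τ y :=
  (Subtype.val_injective.comp (tailEquiv i).injective).minimalPeriod_eq_of_semiconj
    (fun y => (closeCycle_apply_tailEquiv y).symm) y

theorem minimalPeriod_closeCycle_of_le {x : Fin n} (hx : x ≤ i) :
    minimalPeriod (closeCycle i τ) x = i + 1 := by
  have hkn : (i : ℕ) + 1 ≤ n := i.isLt
  rw [minimalPeriod_eq_of_eqOn (s := {x : Fin n | (x : ℕ) < i + 1})
    (fun y hy => (headCycle_lt_iff hkn).2 hy)
    (fun y hy => closeCycle_apply_of_le (Nat.le_of_lt_succ hy)) (Nat.lt_succ_of_le hx),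
    minimalPeriod_headCycle hkn (Nat.lt_succ_of_le hx)]

theorem noCycleLenMulOf_closeCycle_iff :
    NoCycleLenMulOf q (closeCycle i τ) ↔ ¬ q ∣ i + 1 ∧ NoCycleLenMulOf q τ := by
  constructor
  · intro h
    refine ⟨?_, fun y => ?_⟩
    · simpa [minimalPeriod_closeCycle_of_le le_rfl] using h i
    · simpa [minimalPeriod_closeCycle_tailEquiv] using h (tailEquiv i y)
  · rintro ⟨hk, hτ⟩ x
    rcases le_or_gt x i with hx | hx
    · rwa [minimalPeriod_closeCycle_of_le hx]
    · obtain ⟨y, hy⟩ := (tailEquiv i).surjective ⟨x, hx⟩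
      rw [show x = tailEquiv i y by rw [hy], minimalPeriod_closeCycle_tailEquiv]
      exact hτ y

theorem closeCycle_injective : Injective (closeCycle (n := n) i) := fun _ _ h =>
  Perm.extendDomainHom_injective (tailEquiv i) (mul_right_cancel h)

theorem range_closeCycle : range (closeCycle i) = {σ ∈ pathPerms n (i + 1) | (σ i : ℕ) = 0} := by
  set c := headCycle n (i + 1)
  have hc : ∀ x : Fin n, x ≤ i → (c x : ℕ) = (x + 1) % (i + 1) := fun x hx =>
    headCycle_apply_of_lt i.isLt (Nat.lt_succ_of_le hx)
  ext σ
  constructor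
  · rintro ⟨τ, rfl⟩
    refine ⟨fun j hj => ?_, ?_⟩
    · rw [closeCycle_apply_of_le (Fin.le_def.2 (by omega)), hc j (Fin.le_def.2 (by omega)),
        Nat.mod_eq_of_lt hj]
    · rw [closeCycle_apply_of_le le_rfl, hc i le_rfl, Nat.mod_self]
  · rintro ⟨hσ, hσi⟩
    have hagree : ∀ x : Fin n, x ≤ i → σ x = c x := fun x hx => by
      rw [Fin.ext_iff, hc x hx]
      rcases hx.lt_or_eq with hx | rfl
      · rw [hσ x (by omega), Nat.mod_eq_of_lt (by omega)]
      · rw [hσi, Nat.mod_self]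
    obtain ⟨τ, hτ⟩ := Perm.exists_extendDomain_eq (tailEquiv i) (g := σ * c⁻¹) fun x hx => by
      have hx' : c⁻¹ x ≤ i := Nat.le_of_lt_succ <| (headCycle_lt_iff (k := i + 1) i.isLt).1 <| by
        change (c (c⁻¹ x) : ℕ) < i + 1
        rw [Perm.coe_inv, apply_symm_apply]
        exact Nat.lt_succ_of_le (not_lt.1 hx)
      rw [Perm.mul_apply, hagree _ hx', Perm.coe_inv, apply_symm_apply]
    exact ⟨τ, by rw [closeCycle, hτ, inv_mul_cancel_right]⟩

end closeCycle

theorem ncard_noCycle_range_closeCycle (i : Fin n) :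
    {σ ∈ range (closeCycle i) | NoCycleLenMulOf q σ}.ncard =
      if q ∣ i + 1 then 0 else noCycleCount q (n - (i + 1)) := by
  rw [show {σ ∈ range (closeCycle i) | NoCycleLenMulOf q σ} =
    range (closeCycle i) ∩ {σ | NoCycleLenMulOf q σ} from rfl, ← image_preimage_eq_range_inter,
    ncard_image_of_injective _ closeCycle_injective]
  simp only [preimage_ofPred_eq, noCycleLenMulOf_closeCycle_iff]
  split_ifs with h <;> simp [h, noCycleCount]

theorem pathCount_succ (i : Fin n) :
    pathCount q n (i + 1) = (if q ∣ i + 1 then 0 else noCycleCount q (n - (i + 1))) +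
      (n - (i + 1)) * pathCount q n (i + 2) := by
  set S := {σ ∈ pathPerms n (i + 1) | NoCycleLenMulOf q σ}
  have hfiber : ∀ v : ℕ, {σ ∈ S | (σ i : ℕ) = v} =
      {σ ∈ {σ ∈ pathPerms n (i + 1) | (σ i : ℕ) = v} | NoCycleLenMulOf q σ} :=
    fun v => by ext σ; exact and_right_comm
  have hclosed : {σ ∈ S | (σ i : ℕ) = 0}.ncard =
      if q ∣ i + 1 then 0 else noCycleCount q (n - (i + 1)) := by
    rw [hfiber, ← range_closeCycle, ncard_noCycle_range_closeCycle]
  have hopen : ∀ v ∈ Finset.Ico ((i : ℕ) + 1) n,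
      {σ ∈ S | (σ i : ℕ) = v}.ncard = pathCount q n (i + 2) := fun v hv => by
    rw [Finset.mem_Ico] at hv
    rw [hfiber]
    exact ncard_noCycle_eq_of_conj _ (mem_pathPerms_succ_iff hv.1 hv.2)
  have hempty : ∀ v ∈ Finset.range n, v ∉ insert 0 (Finset.Ico ((i : ℕ) + 1) n) →
      {σ ∈ S | (σ i : ℕ) = v}.ncard = 0 := fun v _ hv => by
    rw [ncard_eq_zero]
    refine eq_empty_of_forall_notMem fun σ ⟨⟨hσ, _⟩, hσv⟩ => hv ?_
    have := lt_apply_of_mem_pathPerms hσ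
    simp only [Finset.mem_insert, Finset.mem_Ico] at hv ⊢
    omega
  have hsub : insert 0 (Finset.Ico ((i : ℕ) + 1) n) ⊆ Finset.range n := fun v hv => by
    simp only [Finset.mem_insert, Finset.mem_Ico, Finset.mem_range] at hv ⊢
    have := i.isLt
    omega
  rw [pathCount, ncard_eq_sum_ncard_fiber (toFinite S) (f := fun σ => (σ i : ℕ))
      (t := Finset.range n) fun σ _ => Finset.mem_range.2 (σ i).isLt,
    ← Finset.sum_subset hsub hempty,
    Finset.sum_insert (by simp), hclosed, Finset.sum_congr rfl hopen, Finset.sum_const,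
    Nat.card_Ico, smul_eq_mul]

theorem fq_zero (q : ℕ) : fq q 0 = 1 := rfl

theorem fq_succ (q m : ℕ) :
    (fq q (m + 1) : ℤ) = (m + 1 - if q ∣ m + 1 then 1 else 0) * fq q m := by
  rw [fq, Finset.prod_Icc_succ_top (by omega), ← fq, mul_comm]
  split_ifs <;> push_cast <;> ring

def correction (q n k : ℕ) : ℤ :=
  if (-(k : ℤ)) % q ≤ (q : ℤ) - 2 - (n : ℤ) % q then 1 else 0

theorem Nat.add_one_mod_cases (hq : 0 < q) (x : ℕ) :
    (x % q + 1 = q ∧ (x + 1) % q = 0) ∨ (x % q + 1 < q ∧ (x + 1) % q = x % q + 1) := by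
  rw [Nat.add_mod]
  have := Nat.mod_lt x hq
  rcases Nat.lt_or_ge 1 q with h | h
  · rw [Nat.one_mod_eq_one.mpr (by omega)]
    rcases Nat.lt_or_ge (x % q + 1) q with h' | h'
    · exact .inr ⟨h', Nat.mod_eq_of_lt h'⟩
    · exact .inl ⟨by omega, by rw [show x % q + 1 = q by omega, Nat.mod_self]⟩
  · obtain rfl : q = 1 := by omega
    simp [Nat.mod_one]

theorem correction_add_eq (hq : 0 < q) (m k : ℕ) :
    correction q (m + k) k =
      if (k % q = 0 ∨ q ≤ k % q + m % q) ∧ m % q + 1 ≠ q then 1 else 0 := by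
  have hneg : (-(k : ℤ)) % q = if k % q = 0 then 0 else (q : ℤ) - (k % q : ℕ) := by
    simp [Int.neg_emod, Int.natCast_dvd_natCast, Nat.dvd_iff_mod_eq_zero]
  rw [correction, hneg, ← Int.natCast_mod, Nat.add_mod_eq_ite]
  have := Nat.mod_lt k hq
  have := Nat.mod_lt m hq
  split_ifs <;> omega

theorem correction_of_dvd (hq : 0 < q) {m : ℕ} (hm : q ∣ m) (k : ℕ) :
    correction q (m + k) k = (if q ∣ k then 1 else 0) - (if q ∣ m + 1 then 1 else 0) := by
  rw [correction_add_eq hq]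
  simp only [Nat.dvd_iff_mod_eq_zero] at hm ⊢
  have := Nat.mod_lt k hq
  have := Nat.add_one_mod_cases hq m
  split_ifs <;> omega

theorem correction_succ (hq : 0 < q) (m k : ℕ) :
    correction q (m + 1 + k) (k + 1) =
      correction q (m + 1 + k) k + (if q ∣ m + 1 + 1 then 1 else 0) - (if q ∣ k then 1 else 0) := by
  rw [show m + 1 + k = m + (k + 1) by ring, correction_add_eq hq m (k + 1),
    show m + (k + 1) = m + 1 + k by ring, correction_add_eq hq (m + 1) k]
  simp only [Nat.dvd_iff_mod_eq_zero]
  have := Nat.mod_lt k hq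
  have := Nat.mod_lt m hq
  have := Nat.add_one_mod_cases hq m
  have := Nat.add_one_mod_cases hq (m + 1)
  have := Nat.add_one_mod_cases hq k
  split_ifs <;> omega

def closedForm (q n k : ℕ) : ℤ := fq q (n - k + 1) - correction q n k * fq q (n - k)

theorem closedForm_eq (hq : 0 < q) {n k : ℕ} (hkn : k ≤ n) :
    closedForm q n k =
      (if q ∣ k then 0 else (fq q (n - k) : ℤ)) + (n - k : ℕ) * closedForm q n (k + 1) := by
  obtain ⟨m, rfl⟩ := Nat.exists_eq_add_of_le' hkn
  rcases m with _ | m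
  · have h := correction_of_dvd hq (dvd_zero q) k
    rw [zero_add] at h
    simp only [closedForm, Nat.sub_self, zero_add, fq_succ q 0, fq_zero, h]
    split_ifs <;> norm_num
  · have hi := correction_succ hq m k
    have hii : ((if q ∣ k then 1 else 0) - (if q ∣ m + 1 + 1 then 1 else 0)
        - correction q (m + 1 + k) k) * (if q ∣ m + 1 then 1 else 0) = 0 := by
      by_cases h : q ∣ m + 1
      · rw [correction_of_dvd hq h k, if_pos h]; ring
      · rw [if_neg h]; ring
    have h2 := fq_succ q (m + 1)
    have h1 := fq_succ q m
    have hk : (if q ∣ k then 0 else (fq q (m + 1) : ℤ))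
        = (1 - if q ∣ k then 1 else 0) * fq q (m + 1) := by
      split_ifs <;> ring
    simp only [closedForm, show m + 1 + k - k = m + 1 by omega,
      show m + 1 + k - (k + 1) = m by omega, hk]
    push_cast at h2 ⊢
    linear_combination h2 + ((if q ∣ k then 1 else 0) - (if q ∣ m + 1 + 1 then 1 else 0)
        - correction q (m + 1 + k) k) * h1 + ((m : ℤ) + 1) * (fq q m : ℤ) * hi - (fq q m : ℤ) * hii

theorem correction_one (hq : 0 < q) (m : ℕ) : correction q m 1 = 0 := by
  have h1 : (-((1 : ℕ) : ℤ)) % q = q - 1 :=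
    ((Int.ediv_emod_unique (q := -1) (by omega)).2 ⟨by push_cast; ring, by omega, by omega⟩).2
  have := Int.emod_nonneg (m : ℤ) (by omega : (q : ℤ) ≠ 0)
  rw [correction, if_neg (by omega)]

theorem pathCount_eq_closedForm (hq : 0 < q) {k : ℕ} (hk : 1 ≤ k) (hkn : k ≤ n) :
    (pathCount q n k : ℤ) = closedForm q n k := by
  induction hd : n - k using Nat.strong_induction_on generalizing n k with
  | _ d ih =>
  obtain ⟨i, rfl⟩ : ∃ i : Fin n, (i : ℕ) + 1 = k := ⟨⟨k - 1, by omega⟩, Nat.sub_add_cancel hk⟩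
  have htail : (noCycleCount q (n - (i + 1)) : ℤ) = fq q (n - (i + 1)) := by
    rcases Nat.eq_zero_or_pos (n - (i + 1)) with h0 | hpos
    · rw [h0, fq_zero, noCycleCount_zero, Nat.cast_one]
    · have := ih _ (by omega) le_rfl hpos rfl
      rw [pathCount, pathPerms_one, sep_univ] at this
      rw [noCycleCount, this, closedForm, correction_one hq, zero_mul, sub_zero,
        Nat.sub_add_cancel hpos]
  rw [pathCount_succ, closedForm_eq hq hkn]
  push_cast
  rw [htail]
  rcases Nat.lt_or_ge ((i : ℕ) + 1) n with hlt | hge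
  · rw [ih _ (by omega) (by omega) hlt rfl]
  · simp [show n - (i + 1) = 0 by omega]

theorem stmt_8 (q n k : ℕ) (hq : 0 < q) (hk : 1 ≤ k) (hkn : k ≤ n) :
    ({σ ∈ cosetC n k | NoCycleLenMulOf q σ}.ncard : ℤ) =
      fq q (n - k + 1) -
        (if (-(k : ℤ)) % q ≤ (q : ℤ) - 2 - (n : ℤ) % q then 1 else 0) * fq q (n - k) := by
  rw [ncard_cosetC_noCycle hkn]
  exact pathCount_eq_closedForm hq hk hkn
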